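/- (Relaxed forward-backward splitting with extended step-size range.) Let H be a real Hilbert space, M a bounded self-adjoint strongly positive linear operator on H, B : H → 2^H maximally monotone, and E : H → H (1/β_E)-cocoercive w.r.t. ‖·‖_M with β_E > 0, i.e., ⟨Ex − Ey, x − y⟩ ≥ (1/β_E)‖Ex − Ey‖²_{M⁻¹} for all x, y; assume zer(B + E) := {x : −Ex ∈ Bx} is nonempty. Let ε, ε_θ ∈ (0, 1), and suppose γ_k ∈ [ε, 1/ε] with γ_k·β_E ≤ 4 − ε and θ_k ∈ [ε_θ, 2 − ε_θ] for all k. Let x_0 ∈ H and for each k let x̂_k be the unique point with M x_k − γ_k·E x_k − M x̂_k ∈ γ_k·B x̂_k, and set x_{k+1} := (1 − θ_k(1 − β_E·γ_k/4))·x_k + θ_k(1 − β_E·γ_k/4)·x̂_k. Then x_k converges weakly to some x̄ ∈ zer(B + E). -/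

import Mathlib

open Filter Topology

/-- The norm `‖x‖_M := √⟨x, Mx⟩` induced by a bounded self-adjoint strongly positive
linear operator `M`. -/
noncomputable def pnorm {H : Type*} [NormedAddCommGroup H] [InnerProductSpace ℝ H]
    (M : H →L[ℝ] H) (x : H) : ℝ := Real.sqrt (inner ℝ x (M x))

/-- A set-valued operator (identified with its graph) is monotone. -/
def IsMonotoneOp {H : Type*} [NormedAddCommGroup H] [InnerProductSpace ℝ H]
    (A : H → Set H) : Prop :=
  ∀ ⦃x u y v⦄, u ∈ A x → v ∈ A y → (0:ℝ) ≤ inner ℝ (u - v) (x - y)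

/-- A set-valued operator is maximally monotone. -/
def IsMaxMonotoneOp {H : Type*} [NormedAddCommGroup H] [InnerProductSpace ℝ H]
    (A : H → Set H) : Prop :=
  IsMonotoneOp A ∧ ∀ x u, (∀ y v, v ∈ A y → (0:ℝ) ≤ inner ℝ (u - v) (x - y)) → u ∈ A x

/-- Weak convergence of a sequence in a Hilbert space. -/
def WeakConvergesTo {H : Type*} [NormedAddCommGroup H] [InnerProductSpace ℝ H]
    (x : ℕ → H) (xbar : H) : Prop :=
  ∀ y : H, Tendsto (fun k => (inner ℝ (x k) y : ℝ)) atTop (nhds (inner ℝ xbar y))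

open scoped RealInnerProductSpace

/-!
For every zero `z` of `B + E`, monotonicity of `B`, cocoercivity of `E` and a Young inequality in
the `M`-geometry give the Fejér-type descent
`‖x_{k+1} - z‖²_M + δ (‖x̂_k - x_k‖²_M + ‖E x_k - E z‖²_{M⁻¹}) ≤ ‖x_k - z‖²_M`
with `δ > 0` independent of `k`: the slack in `γ_k β_E ≤ 4 - ε` lets the Young parameter sit
slightly below `1 / β_E`, so a fixed share of the cocoercivity survives. Hence the `M`-distances
to every zero converge, `x̂_k - x_k → 0`, `E x_k → E z`, and the elements `u_k ∈ B x̂_k` produced by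
the resolvent step converge strongly to `-E z`. A weak cluster point `w` of `(x_k)` is then a zero:
the graph of a maximally monotone operator is closed under weak × strong limits, and
cocoercivity forces `E w = E z`. Opial's argument turns this into weak convergence of the whole
sequence.
-/

section

variable {H : Type*} [NormedAddCommGroup H] [InnerProductSpace ℝ H]

namespace WeakConvergesTo

variable {x y : ℕ → H} {w v : H}

theorem of_tendsto (hx : Tendsto x atTop (𝓝 w)) : WeakConvergesTo x w :=
  fun _ => hx.inner tendsto_const_nhds

theorem add (hx : WeakConvergesTo x w) (hy : WeakConvergesTo y v) :
    WeakConvergesTo (x + y) (w + v) :=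
  fun z => by simpa only [Pi.add_apply, inner_add_left] using (hx z).add (hy z)

theorem exists_norm_le [CompleteSpace H] (hx : WeakConvergesTo x w) : ∃ R, ∀ k, ‖x k‖ ≤ R := by
  obtain ⟨R, hR⟩ := banach_steinhaus (g := fun k => innerSL ℝ (x k)) fun z => by
    obtain ⟨C, hC⟩ := isBounded_iff_forall_norm_le.1 (Metric.isBounded_range_of_tendsto _ (hx z))
    exact ⟨C, fun k => hC _ ⟨k, rfl⟩⟩
  exact ⟨R, fun k => (innerSL_apply_norm ℝ (x k)).symm.trans_le (hR k)⟩

theorem tendsto_inner [CompleteSpace H] (hx : WeakConvergesTo x w) {u : ℕ → H}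
    (hu : Tendsto u atTop (𝓝 v)) : Tendsto (fun k => ⟪u k, x k⟫) atTop (𝓝 ⟪v, w⟫) := by
  obtain ⟨R, hR⟩ := hx.exists_norm_le
  have hsmall : Tendsto (fun k => ⟪u k - v, x k⟫) atTop (𝓝 0) := by
    refine squeeze_zero_norm (fun k => (norm_inner_le_norm _ _).trans
      (mul_le_mul_of_nonneg_left (hR k) (norm_nonneg _))) ?_
    simpa using (tendsto_iff_norm_sub_tendsto_zero.1 hu).mul_const R
  have hfixed : Tendsto (fun k => ⟪v, x k⟫) atTop (𝓝 ⟪v, w⟫) := by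
    simpa only [real_inner_comm v] using hx v
  simpa [inner_sub_left] using hsmall.add hfixed

end WeakConvergesTo

theorem exists_weakConvergesTo_subseq [CompleteSpace H] {x : ℕ → H} {R : ℝ}
    (hx : ∀ k, ‖x k‖ ≤ R) :
    ∃ w : H, ∃ φ : ℕ → ℕ, StrictMono φ ∧ WeakConvergesTo (x ∘ φ) w := by
  set K := (Submodule.span ℝ (Set.range x)).topologicalClosure
  have : TopologicalSpace.SeparableSpace K := by
    have := ((Set.countable_range x).isSeparable.span (R := ℝ)).closure.separableSpace
    rwa [← Submodule.topologicalClosure_coe] at this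
  have hxK : ∀ k, x k ∈ K :=
    fun k => Submodule.le_topologicalClosure _ (Submodule.subset_span ⟨k, rfl⟩)
  set f : ℕ → WeakDual ℝ K := fun k => InnerProductSpace.toDual ℝ K ⟨x k, hxK k⟩
  have hf : ∀ k, f k ∈ WeakDual.toStrongDual ⁻¹' Metric.closedBall 0 R := fun k =>
    mem_closedBall_zero_iff.2 (((InnerProductSpace.toDual ℝ K).norm_map _).trans_le (hx k))
  obtain ⟨a, -, φ, hφ, ha⟩ := WeakDual.isSeqCompact_closedBall ℝ K 0 R hf
  refine ⟨((InnerProductSpace.toDual ℝ K).symm (WeakDual.toStrongDual a) : H), φ, hφ, fun y => ?_⟩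
  -- test against the projection of `y` onto the closed span, where `a` is known
  have hlim := ((WeakDual.eval_continuous (K.orthogonalProjectionOnto y)).tendsto a).comp ha
  rw [← Submodule.inner_orthogonalProjectionOnto_eq_of_mem_left,
    InnerProductSpace.toDual_symm_apply]
  exact hlim.congr fun k => K.inner_orthogonalProjectionOnto_eq_of_mem_left ⟨x (φ k), hxK _⟩ y

def IsStronglyPositive (M : H →L[ℝ] H) : Prop :=
  ∃ c > 0, ∀ x : H, c * ‖x‖ ^ 2 ≤ ⟪x, M x⟫

namespace IsStronglyPositive

variable {M : H →L[ℝ] H}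

theorem inner_self_nonneg (hM : IsStronglyPositive M) (x : H) : 0 ≤ ⟪x, M x⟫ := by
  obtain ⟨c, hc, h⟩ := hM
  exact (by positivity : 0 ≤ c * ‖x‖ ^ 2).trans (h x)

theorem eq_zero_of_inner_self_nonpos (hM : IsStronglyPositive M) {x : H} (hx : ⟪x, M x⟫ ≤ 0) :
    x = 0 := by
  obtain ⟨c, hc, h⟩ := hM
  have : ‖x‖ ^ 2 ≤ 0 := by nlinarith [h x]
  simpa using this

theorem tendsto_zero_of_tendsto_inner_self (hM : IsStronglyPositive M) {x : ℕ → H}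
    (hx : Tendsto (fun k => ⟪x k, M (x k)⟫) atTop (𝓝 0)) : Tendsto x atTop (𝓝 0) := by
  obtain ⟨c, hc, h⟩ := hM
  have hsq : Tendsto (fun k => ‖x k‖ ^ 2) atTop (𝓝 0) :=
    squeeze_zero (fun k => by positivity) (fun k => (le_div_iff₀' hc).2 (h (x k)))
      (by simpa using hx.div_const c)
  rw [tendsto_zero_iff_norm_tendsto_zero]
  simpa using hsq.sqrt

theorem exists_norm_le_of_tendsto (hM : IsStronglyPositive M) {x : ℕ → H} {L : ℝ}
    (hx : Tendsto (fun k => ⟪x k, M (x k)⟫) atTop (𝓝 L)) : ∃ R, ∀ k, ‖x k‖ ≤ R := by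
  obtain ⟨c, hc, h⟩ := hM
  obtain ⟨C, hC⟩ := hx.bddAbove_range
  refine ⟨√(C / c), fun k => Real.le_sqrt_of_sq_le ((le_div_iff₀' hc).2 ?_)⟩
  exact (h (x k)).trans (hC ⟨k, rfl⟩)

theorem pnorm_sq (hM : IsStronglyPositive M) (x : H) : pnorm M x ^ 2 = ⟪x, M x⟫ :=
  Real.sq_sqrt (hM.inner_self_nonneg x)

end IsStronglyPositive

theorem LinearMap.IsSymmetric.inner_apply_comm {M : H →L[ℝ] H}
    (hMs : (M : H →ₗ[ℝ] H).IsSymmetric) (x y : H) :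
    ⟪x, M y⟫ = ⟪y, M x⟫ :=
  (real_inner_comm _ _).trans (hMs y x)

theorem LinearMap.IsSymmetric.inner_add_smul_apply_add_smul {M : H →L[ℝ] H}
    (hMs : (M : H →ₗ[ℝ] H).IsSymmetric) (a b : H) (t : ℝ) :
    ⟪a + t • b, M (a + t • b)⟫ = ⟪a, M a⟫ + 2 * t * ⟪b, M a⟫ + t ^ 2 * ⟪b, M b⟫ := by
  simp only [map_add, map_smul, inner_add_left, inner_add_right, real_inner_smul_left,
    real_inner_smul_right, hMs.inner_apply_comm a b]
  ring

theorem IsStronglyPositive.of_comp_eq_id {M Minv : H →L[ℝ] H} (hM : IsStronglyPositive M)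
    (hinv : M.comp Minv = ContinuousLinearMap.id ℝ H) : IsStronglyPositive Minv := by
  obtain ⟨c, hc, h⟩ := hM
  refine ⟨c / (‖M‖ ^ 2 + 1), by positivity, fun v => ?_⟩
  set y := Minv v
  have hv : M y = v := DFunLike.congr_fun hinv v
  have hnorm : ‖v‖ ^ 2 ≤ ‖M‖ ^ 2 * ‖y‖ ^ 2 := by
    rw [← mul_pow, ← hv]
    gcongr
    exact M.le_opNorm y
  calc c / (‖M‖ ^ 2 + 1) * ‖v‖ ^ 2 ≤ c / (‖M‖ ^ 2 + 1) * (‖M‖ ^ 2 * ‖y‖ ^ 2) := by gcongr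
    _ = c * ‖y‖ ^ 2 * (‖M‖ ^ 2 / (‖M‖ ^ 2 + 1)) := by ring
    _ ≤ c * ‖y‖ ^ 2 * 1 := by
        gcongr
        exact div_le_one_of_le₀ (by linarith) (by positivity)
    _ ≤ ⟪y, M y⟫ := by rw [mul_one]; exact h y
    _ = ⟪v, Minv v⟫ := by rw [hv, real_inner_comm]

theorem neg_inner_le_of_comp_eq_id {M Minv : H →L[ℝ] H} (hMs : (M : H →ₗ[ℝ] H).IsSymmetric)
    (hM : IsStronglyPositive M) (hinv : M.comp Minv = ContinuousLinearMap.id ℝ H) (e d : H)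
    {t : ℝ} (ht : 0 < t) : -⟪e, d⟫ ≤ t * ⟪e, Minv e⟫ + ⟪d, M d⟫ / (4 * t) := by
  have hv : M (Minv e) = e := DFunLike.congr_fun hinv e
  -- expand `0 ≤ ‖d + 2t M⁻¹e‖²_M`
  have hsq := hM.inner_self_nonneg (d + (2 * t) • Minv e)
  rw [hMs.inner_add_smul_apply_add_smul, hMs.inner_apply_comm (Minv e), hv, real_inner_comm e d,
    real_inner_comm e (Minv e)] at hsq
  have key : t * ⟪e, Minv e⟫ + ⟪d, M d⟫ / (4 * t) - -⟪e, d⟫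
      = (⟪d, M d⟫ + 2 * (2 * t) * ⟪e, d⟫ + (2 * t) ^ 2 * ⟪e, Minv e⟫) / (4 * t) := by
    field_simp
    ring
  rw [← sub_nonneg, key]
  positivity

section Opial

variable {M : H →L[ℝ] H}

theorem eq_of_weakConvergesTo_comp (hMs : (M : H →ₗ[ℝ] H).IsSymmetric)
    (hM : IsStronglyPositive M) {x : ℕ → H} {w w' : H} {L L' : ℝ}
    (hL : Tendsto (fun k => ⟪x k - w, M (x k - w)⟫) atTop (𝓝 L))
    (hL' : Tendsto (fun k => ⟪x k - w', M (x k - w')⟫) atTop (𝓝 L'))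
    {φ ψ : ℕ → ℕ} (hφ : Tendsto φ atTop atTop) (hψ : Tendsto ψ atTop atTop)
    (hw : WeakConvergesTo (x ∘ φ) w) (hw' : WeakConvergesTo (x ∘ ψ) w') : w = w' := by
  set d := w - w'
  -- the difference of the two convergent quadratic sequences is affine in `⟪x k, M d⟫`
  have hlin : Tendsto (fun k => ⟪x k, M d⟫) atTop
      (𝓝 ((L' - L - (⟪w', M w'⟫ - ⟪w, M w⟫)) / 2)) := by
    refine (((hL'.sub hL).sub_const _).div_const 2).congr fun k => ?_
    simp only [d, map_sub, inner_sub_left, inner_sub_right, hMs.inner_apply_comm w,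
      hMs.inner_apply_comm w']
    ring
  have hφlim := tendsto_nhds_unique (hw (M d)) (hlin.comp hφ)
  have hψlim := tendsto_nhds_unique (hw' (M d)) (hlin.comp hψ)
  refine sub_eq_zero.1 (hM.eq_zero_of_inner_self_nonpos ?_)
  rw [inner_sub_left, hφlim, hψlim, sub_self]

/-- Opial's lemma in the geometry of `M`. -/
theorem exists_weakConvergesTo_of_forall_tendsto [CompleteSpace H]
    (hMs : (M : H →ₗ[ℝ] H).IsSymmetric) (hM : IsStronglyPositive M) {S : Set H} {x : ℕ → H}
    (hS : S.Nonempty)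
    (hconv : ∀ z ∈ S, ∃ L, Tendsto (fun k => ⟪x k - z, M (x k - z)⟫) atTop (𝓝 L))
    (hclust : ∀ (φ : ℕ → ℕ) (w : H), Tendsto φ atTop atTop → WeakConvergesTo (x ∘ φ) w → w ∈ S) :
    ∃ w ∈ S, WeakConvergesTo x w := by
  obtain ⟨z, hz⟩ := hS
  obtain ⟨L, hL⟩ := hconv z hz
  obtain ⟨R, hR⟩ := hM.exists_norm_le_of_tendsto hL
  have hbdd : ∀ k, ‖x k‖ ≤ R + ‖z‖ := fun k =>
    (norm_le_norm_sub_add (x k) z).trans (by linarith [hR k])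
  obtain ⟨w, φ, hφ, hw⟩ := exists_weakConvergesTo_subseq hbdd
  have hwS := hclust φ w hφ.tendsto_atTop hw
  refine ⟨w, hwS, fun y => tendsto_of_subseq_tendsto fun ns hns => ?_⟩
  obtain ⟨w', ψ, hψ, hw'⟩ := exists_weakConvergesTo_subseq fun k => hbdd (ns k)
  have hnsψ : Tendsto (ns ∘ ψ) atTop atTop := hns.comp hψ.tendsto_atTop
  obtain ⟨L', hL'⟩ := hconv w' (hclust _ w' hnsψ hw')
  obtain ⟨L, hL⟩ := hconv w hwS
  obtain rfl := eq_of_weakConvergesTo_comp hMs hM hL' hL hnsψ hφ.tendsto_atTop hw' hw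
  exact ⟨ψ, hw' y⟩

end Opial

theorem IsMaxMonotoneOp.mem_of_weakConvergesTo [CompleteSpace H] {B : H → Set H}
    (hB : IsMaxMonotoneOp B) {x u : ℕ → H} {w v : H} (hmem : ∀ k, u k ∈ B (x k))
    (hx : WeakConvergesTo x w) (hu : Tendsto u atTop (𝓝 v)) : v ∈ B w := by
  refine hB.2 w v fun y v' hv' => ?_
  have hlim : Tendsto (fun k => ⟪u k - v', x k⟫ - ⟪u k - v', y⟫) atTop
      (𝓝 (⟪v - v', w⟫ - ⟪v - v', y⟫)) :=
    (hx.tendsto_inner (hu.sub_const v')).sub ((hu.sub_const v').inner tendsto_const_nhds)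
  rw [inner_sub_right]
  exact ge_of_tendsto' hlim fun k => by rw [← inner_sub_right]; exact hB.1 (hmem k) hv'

/-- `E` is `κ`-cocoercive with respect to the norm `‖·‖_M`, whose dual norm is `‖·‖_{M⁻¹}`. -/
def IsCocoercive (Minv : H →L[ℝ] H) (κ : ℝ) (E : H → H) : Prop :=
  ∀ x y, κ * ⟪E x - E y, Minv (E x - E y)⟫ ≤ ⟪E x - E y, x - y⟫

theorem IsCocoercive.eq_of_weakConvergesTo [CompleteSpace H] {Minv : H →L[ℝ] H} {κ : ℝ}
    {E : H → H} (hE : IsCocoercive Minv κ E) (hκ : 0 < κ) (hMinv : IsStronglyPositive Minv)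
    {x : ℕ → H} {w e : H} (hx : WeakConvergesTo x w)
    (hEx : Tendsto (fun k => E (x k)) atTop (𝓝 e)) : E w = e := by
  have hd : Tendsto (fun k => E (x k) - E w) atTop (𝓝 (e - E w)) := hEx.sub_const _
  have hlhs : Tendsto (fun k => κ * ⟪E (x k) - E w, Minv (E (x k) - E w)⟫) atTop
      (𝓝 (κ * ⟪e - E w, Minv (e - E w)⟫)) :=
    (hd.inner ((Minv.continuous.tendsto _).comp hd)).const_mul κ
  have hrhs : Tendsto (fun k => ⟪E (x k) - E w, x k - w⟫) atTop (𝓝 0) := by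
    simpa [inner_sub_right] using (hx.tendsto_inner hd).sub (hd.inner (tendsto_const_nhds (x := w)))
  have hle := le_of_tendsto_of_tendsto' hlhs hrhs fun k => hE (x k) w
  have hzero := hMinv.eq_zero_of_inner_self_nonpos (nonpos_of_mul_nonpos_right hle hκ)
  exact (sub_eq_zero.1 hzero).symm

theorem inner_add_smul_le_of_monotone_of_cocoercive {M Minv : H →L[ℝ] H}
    (hMs : (M : H →ₗ[ℝ] H).IsSymmetric) (hM : IsStronglyPositive M)
    (hinv : M.comp Minv = ContinuousLinearMap.id ℝ H) {A D e : H} {κ γ r t : ℝ}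
    (hr : 0 ≤ r) (hγ : 0 ≤ γ) (ht : 0 < t) (hmono : ⟪M D + γ • e, A + D⟫ ≤ 0)
    (hcoco : κ * ⟪e, Minv e⟫ ≤ ⟪e, A⟫) :
    ⟪A + r • D, M (A + r • D)⟫ ≤ ⟪A, M A⟫ - r * (2 - r - γ / (2 * t)) * ⟪D, M D⟫
      - 2 * r * γ * (κ - t) * ⟪e, Minv e⟫ := by
  have hyoung := neg_inner_le_of_comp_eq_id hMs hM hinv e D ht
  rw [inner_add_left, inner_add_right, inner_add_right, real_inner_smul_left,
    real_inner_smul_left, real_inner_comm A, real_inner_comm D, hMs.inner_apply_comm A] at hmono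
  rw [hMs.inner_add_smul_apply_add_smul]
  have h2t : γ / (2 * t) = 2 * γ * (1 / (4 * t)) := by field_simp; ring
  rw [h2t]
  linear_combination (2 * r) * hmono + (2 * r * γ) * hcoco + (2 * r * γ) * hyoung

theorem exists_uniform_relaxation_coeff {β ε εθ : ℝ} (hβ : 0 < β) (hε : 0 < ε) (hεθ : 0 < εθ) :
    ∃ δ > 0, ∃ t > 0, ∀ γ θ : ℝ, ε ≤ γ → γ * β ≤ 4 - ε → εθ ≤ θ → θ ≤ 2 - εθ →
      δ ≤ θ * (1 - β * γ / 4) * (2 - θ * (1 - β * γ / 4) - γ / (2 * t)) ∧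
      δ ≤ 2 * (θ * (1 - β * γ / 4)) * γ * (1 / β - t) := by
  -- Young's parameter `t = 1 / (β (1 + ρ))` leaves a `ρ`-share of the cocoercivity unused
  set ρ := εθ * ε / 16 with hρ_def
  have hρ : 0 < ρ := by positivity
  refine ⟨min ((εθ * ε / 4) * (εθ * ε / 8)) (2 * (εθ * ε / 4) * ε * (ρ / (β * (1 + ρ)))),
    by positivity, 1 / (β * (1 + ρ)), by positivity, fun γ θ hγ hγβ hθ hθ' => ?_⟩
  have ha : ε / 4 ≤ 1 - β * γ / 4 := by linarith
  set a := 1 - β * γ / 4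
  have hr : εθ * ε / 4 ≤ θ * a := by
    calc εθ * ε / 4 = εθ * (ε / 4) := by ring
      _ ≤ θ * a := mul_le_mul hθ ha (by positivity) (by linarith)
  constructor
  · have hslack : εθ * ε / 8 ≤ 2 - θ * a - γ / (2 * (1 / (β * (1 + ρ)))) := by
      have h2θ : εθ * (ε / 4) ≤ (2 - θ) * a :=
        mul_le_mul (by linarith) ha (by positivity) (by linarith)
      have hγβρ : γ * β * ρ ≤ 4 * ρ := by nlinarith
      have hsplit : 2 - θ * a - γ / (2 * (1 / (β * (1 + ρ)))) = (2 - θ) * a - γ * β * ρ / 2 := by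
        field_simp
        ring
      rw [hsplit]
      linarith
    exact (min_le_left _ _).trans (mul_le_mul hr hslack (by positivity) (by linarith))
  · have hgap : 1 / β - 1 / (β * (1 + ρ)) = ρ / (β * (1 + ρ)) := by
      field_simp
      ring
    refine (min_le_right _ _).trans ?_
    rw [hgap]
    gcongr
    linarith [(by positivity : (0:ℝ) ≤ εθ * ε / 4)]

theorem tendsto_of_add_le_of_nonneg {a b : ℕ → ℝ} (h : ∀ k, a (k + 1) + b k ≤ a k)
    (ha : ∀ k, 0 ≤ a k) (hb : ∀ k, 0 ≤ b k) :
    (∃ L, Tendsto a atTop (𝓝 L)) ∧ Tendsto b atTop (𝓝 0) := by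
  have hanti : Antitone a := antitone_nat_of_succ_le fun k => by linarith [h k, hb k]
  have hL := tendsto_atTop_ciInf hanti ⟨0, Set.forall_mem_range.2 ha⟩
  refine ⟨⟨_, hL⟩, squeeze_zero hb (fun k => le_sub_iff_add_le'.2 (h k)) ?_⟩
  simpa using hL.sub (hL.comp (tendsto_add_atTop_nat 1))

section RelaxedForwardBackward

variable {M Minv : H →L[ℝ] H} {B : H → Set H} {E : H → H} {βE ε εθ : ℝ} {γ θ : ℕ → ℝ}
  {x xh u : ℕ → H}

theorem relaxedFB_fejer (hMs : (M : H →ₗ[ℝ] H).IsSymmetric) (hM : IsStronglyPositive M)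
    (hinv : M.comp Minv = ContinuousLinearMap.id ℝ H) (hB : IsMonotoneOp B)
    (hE : IsCocoercive Minv (1 / βE) E) (hβE : 0 < βE) (hε : 0 < ε) (hεθ : 0 < εθ)
    (hγ : ∀ k, ε ≤ γ k) (hγUB : ∀ k, γ k * βE ≤ 4 - ε) (hθ : ∀ k, εθ ≤ θ k ∧ θ k ≤ 2 - εθ)
    (hu : ∀ k, u k ∈ B (xh k)) (hres : ∀ k, M (x k) - γ k • E (x k) - M (xh k) = γ k • u k)
    (hupd : ∀ k, x (k + 1) =
      (1 - θ k * (1 - βE * γ k / 4)) • x k + (θ k * (1 - βE * γ k / 4)) • xh k) :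
    ∃ δ > 0, ∀ z, -E z ∈ B z → ∀ k,
      ⟪x (k + 1) - z, M (x (k + 1) - z)⟫ + δ * (⟪xh k - x k, M (xh k - x k)⟫
        + ⟪E (x k) - E z, Minv (E (x k) - E z)⟫) ≤ ⟪x k - z, M (x k - z)⟫ := by
  obtain ⟨δ, hδ, t, ht, hcoeff⟩ := exists_uniform_relaxation_coeff hβE hε hεθ
  refine ⟨δ, hδ, fun z hz k => ?_⟩
  obtain ⟨hq, hQ⟩ := hcoeff (γ k) (θ k) (hγ k) (hγUB k) (hθ k).1 (hθ k).2
  have hγk : 0 < γ k := hε.trans_le (hγ k)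
  set r := θ k * (1 - βE * γ k / 4)
  have hr : 0 ≤ r := mul_nonneg (by linarith [(hθ k).1]) (by linarith [hγUB k])
  have hnext : x (k + 1) - z = (x k - z) + r • (xh k - x k) := by rw [hupd k]; module
  have hmono : ⟪M (xh k - x k) + γ k • (E (x k) - E z), (x k - z) + (xh k - x k)⟫ ≤ 0 := by
    have hforward : M (xh k - x k) + γ k • (E (x k) - E z) = -(γ k • (u k - -E z)) := by
      rw [smul_sub (γ k) (u k), ← hres k, map_sub]
      module
    rw [hforward, sub_add_sub_cancel', inner_neg_left, real_inner_smul_left, neg_nonpos]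
    exact mul_nonneg hγk.le (hB (hu k) hz)
  have hstep := inner_add_smul_le_of_monotone_of_cocoercive hMs hM hinv hr hγk.le ht hmono
    (hE (x k) z)
  rw [hnext]
  nlinarith [mul_le_mul_of_nonneg_right hq (hM.inner_self_nonneg (xh k - x k)),
    mul_le_mul_of_nonneg_right hQ ((hM.of_comp_eq_id hinv).inner_self_nonneg (E (x k) - E z))]

theorem relaxedFB_tendsto_residuals (hM : IsStronglyPositive M)
    (hinv : M.comp Minv = ContinuousLinearMap.id ℝ H) (hε : 0 < ε) (hγ : ∀ k, ε ≤ γ k)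
    (hres : ∀ k, M (x k) - γ k • E (x k) - M (xh k) = γ k • u k) {δ : ℝ} (hδ : 0 < δ) {z : H}
    (hdecay : Tendsto (fun k => δ * (⟪xh k - x k, M (xh k - x k)⟫
      + ⟪E (x k) - E z, Minv (E (x k) - E z)⟫)) atTop (𝓝 0)) :
    Tendsto (fun k => xh k - x k) atTop (𝓝 0) ∧ Tendsto (fun k => E (x k)) atTop (𝓝 (E z)) ∧
      Tendsto u atTop (𝓝 (-E z)) := by
  have hMinv := hM.of_comp_eq_id hinv
  have hsum := hdecay.const_mul δ⁻¹
  simp only [← mul_assoc, inv_mul_cancel₀ hδ.ne', one_mul, mul_zero] at hsum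
  have hD := hM.tendsto_zero_of_tendsto_inner_self <| squeeze_zero (fun k => hM.inner_self_nonneg _)
    (fun k => le_add_of_nonneg_right (hMinv.inner_self_nonneg _)) hsum
  have hEx : Tendsto (fun k => E (x k)) atTop (𝓝 (E z)) := by
    simpa using (hMinv.tendsto_zero_of_tendsto_inner_self <| squeeze_zero
      (fun k => hMinv.inner_self_nonneg _)
      (fun k => le_add_of_nonneg_left (hM.inner_self_nonneg _)) hsum).add_const (E z)
  refine ⟨hD, hEx, ?_⟩
  have hγk : ∀ k, 0 < γ k := fun k => hε.trans_le (hγ k)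
  have hu : ∀ k, u k = (γ k)⁻¹ • M (x k - xh k) - E (x k) := fun k => by
    apply smul_right_injective H (hγk k).ne'
    simp only [← hres k, smul_sub, smul_inv_smul₀ (hγk k).ne', map_sub]
    abel
  have hγinv : IsBoundedUnder (· ≤ ·) atTop (norm ∘ fun k => (γ k)⁻¹) :=
    isBoundedUnder_of ⟨ε⁻¹, fun k => by
      rw [Function.comp_apply, Real.norm_eq_abs, abs_inv, abs_of_pos (hγk k)]
      exact inv_anti₀ hε (hγ k)⟩
  have hMD : Tendsto (fun k => M (x k - xh k)) atTop (𝓝 0) := by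
    simpa only [map_zero, Function.comp_def] using
      (M.continuous.tendsto 0).comp (by simpa using hD.neg)
  refine Tendsto.congr (fun k => (hu k).symm) ?_
  simpa using (hγinv.smul_tendsto_zero hMD).sub hEx

end RelaxedForwardBackward

end

theorem relaxed_forward_backward_convergence_general
    {H : Type*} [NormedAddCommGroup H] [InnerProductSpace ℝ H] [CompleteSpace H]
    (M Minv : H →L[ℝ] H)
    (hMsa : IsSelfAdjoint M)
    (hMpos : ∃ c > 0, ∀ x : H, c * ‖x‖ ^ 2 ≤ inner ℝ x (M x))
    (hMinv₁ : M.comp Minv = ContinuousLinearMap.id ℝ H)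
    (B : H → Set H) (hB : IsMaxMonotoneOp B)
    (βE : ℝ) (hβE : 0 < βE)
    (E : H → H)
    (hE : ∀ x y : H,
      (1 / βE) * pnorm Minv (E x - E y) ^ 2 ≤ inner ℝ (E x - E y) (x - y))
    (hzer : ∃ x : H, -E x ∈ B x)
    (ε εθ : ℝ) (hε : 0 < ε ∧ ε < 1) (hεθ : 0 < εθ ∧ εθ < 1)
    (γ θ : ℕ → ℝ)
    (hγ : ∀ k, ε ≤ γ k ∧ γ k ≤ 1 / ε)
    (hγUB : ∀ k, γ k * βE ≤ 4 - ε)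
    (hθ : ∀ k, εθ ≤ θ k ∧ θ k ≤ 2 - εθ)
    -- the algorithm
    (x xh : ℕ → H)
    (hxh : ∀ k, ∃ u ∈ B (xh k), M (x k) - γ k • E (x k) - M (xh k) = γ k • u)
    (hupd : ∀ k, x (k + 1) =
      (1 - θ k * (1 - βE * γ k / 4)) • x k + (θ k * (1 - βE * γ k / 4)) • xh k) :
    ∃ xbar : H, -E xbar ∈ B xbar ∧ WeakConvergesTo x xbar := by
  have hMs := hMsa.isSymmetric
  have hM : IsStronglyPositive M := hMpos
  have hMinv : IsStronglyPositive Minv := hM.of_comp_eq_id hMinv₁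
  have hcoco : IsCocoercive Minv (1 / βE) E := fun a b => by
    simpa only [hMinv.pnorm_sq] using hE a b
  choose u hu hres using hxh
  obtain ⟨δ, hδ, hfejer⟩ := relaxedFB_fejer hMs hM hMinv₁ hB.1 hcoco hβE hε.1 hεθ.1
    (fun k => (hγ k).1) hγUB hθ hu hres hupd
  have hdecay := fun z (hz : -E z ∈ B z) => tendsto_of_add_le_of_nonneg (hfejer z hz)
    (fun k => hM.inner_self_nonneg (x k - z)) fun k => mul_nonneg hδ.le
      (add_nonneg (hM.inner_self_nonneg (xh k - x k)) (hMinv.inner_self_nonneg (E (x k) - E z)))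
  obtain ⟨xs, hxs⟩ := hzer
  obtain ⟨hD, hEx, hulim⟩ := relaxedFB_tendsto_residuals hM hMinv₁ hε.1 (fun k => (hγ k).1) hres
    hδ (hdecay xs hxs).2
  refine exists_weakConvergesTo_of_forall_tendsto (S := {z | -E z ∈ B z}) hMs hM ⟨xs, hxs⟩
    (fun z hz => (hdecay z hz).1) fun φ w hφ hw => ?_
  have hxhw : WeakConvergesTo (xh ∘ φ) w := by
    simpa [Function.comp_def, Pi.add_def] using hw.add (.of_tendsto (hD.comp hφ))
  have hBw : -E xs ∈ B w := hB.mem_of_weakConvergesTo (fun j => hu (φ j)) hxhw (hulim.comp hφ)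
  show -E w ∈ B w
  rwa [hcoco.eq_of_weakConvergesTo (by positivity) hMinv hw (hEx.comp hφ)]

/-- weak convergence of relaxed forward-backward splitting with the
extended step-size range `γ_k·β_E ≤ 4 − ε`. -/
theorem relaxed_forward_backward_convergence
    {H : Type*} [NormedAddCommGroup H] [InnerProductSpace ℝ H] [CompleteSpace H]
    (M Minv : H →L[ℝ] H)
    (hMsa : IsSelfAdjoint M)
    (hMpos : ∃ c > 0, ∀ x : H, c * ‖x‖ ^ 2 ≤ inner ℝ x (M x))
    (hMinv₁ : M.comp Minv = ContinuousLinearMap.id ℝ H)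
    (hMinv₂ : Minv.comp M = ContinuousLinearMap.id ℝ H)
    (B : H → Set H) (hB : IsMaxMonotoneOp B)
    (βE : ℝ) (hβE : 0 < βE)
    (E : H → H)
    (hE : ∀ x y : H,
      (1 / βE) * pnorm Minv (E x - E y) ^ 2 ≤ inner ℝ (E x - E y) (x - y))
    (hzer : ∃ x : H, -E x ∈ B x)
    (ε εθ : ℝ) (hε : 0 < ε ∧ ε < 1) (hεθ : 0 < εθ ∧ εθ < 1)
    (γ θ : ℕ → ℝ)
    (hγ : ∀ k, ε ≤ γ k ∧ γ k ≤ 1 / ε)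
    (hγUB : ∀ k, γ k * βE ≤ 4 - ε)
    (hθ : ∀ k, εθ ≤ θ k ∧ θ k ≤ 2 - εθ)
    -- the algorithm
    (x xh : ℕ → H)
    (hxh : ∀ k, ∃ u ∈ B (xh k), M (x k) - γ k • E (x k) - M (xh k) = γ k • u)
    (hupd : ∀ k, x (k + 1) =
      (1 - θ k * (1 - βE * γ k / 4)) • x k + (θ k * (1 - βE * γ k / 4)) • xh k) :
    ∃ xbar : H, -E xbar ∈ B xbar ∧ WeakConvergesTo x xbar :=
  relaxed_forward_backward_convergence_general M Minv hMsa hMpos hMinv₁ B hB βE hβE E hE hzer ε εθ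
    hε hεθ γ θ hγ hγUB hθ x xh hxh hupd
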